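/- Let S ⊆ {Z_1,...,Z_{d-1}} with |S| = i, and suppose e_{j'}(S ∪ {Z_d}) ∈ I for all j' in a range down to j - k, where I is an ideal of ℂ[Z_1,...,Z_d] containing Z_d^{k+1}. Then using the identity e_j(S ∪ {Z_d}) = e_j(S) + Z_d·e_{j-1}(S) repeatedly, one obtains e_j(S) ≡ Z_d^{k+1}·e_{j-k-1}(S) ≡ 0 mod I; i.e., e_j(S) ∈ I. -/

import Mathlib

open MvPolynomial

noncomputable section

/-- The `j`-th partial elementary symmetric polynomial `e_j(S)` in the variables of a
subset `S` of `{Z_1, …, Z_d}` (with `e_0(S) = 1` and `e_j(S) = 0` for `j > |S|`). -/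
def esymmPart (d : ℕ) (S : Finset (Fin d)) (j : ℕ) : MvPolynomial (Fin d) ℂ :=
  ∑ A ∈ Finset.powersetCard j S, ∏ i ∈ A, X i


lemma esymmPart_insert (d : ℕ) (z : Fin d) (S : Finset (Fin d)) (hz : z ∉ S) (n : ℕ) :
    esymmPart d (insert z S) (n + 1)
      = esymmPart d S (n + 1) + X z * esymmPart d S n := by
  unfold _root_.esymmPart
  rw [Finset.powersetCard_succ_insert hz, Finset.sum_union, Finset.sum_image, Finset.mul_sum]
  · congr 1
    refine Finset.sum_congr rfl fun A hA => ?_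
    rw [Finset.mem_powersetCard] at hA
    rw [Finset.prod_insert (fun h => hz (hA.1 h))]
  · intro A hA B hB h
    rw [Finset.mem_coe, Finset.mem_powersetCard] at hA hB
    have hzA : z ∉ A := fun h => hz (hA.1 h)
    have hzB : z ∉ B := fun h => hz (hB.1 h)
    rw [← Finset.erase_insert hzA, ← Finset.erase_insert hzB, h]
  · rw [Finset.disjoint_left]
    intro A hA hA'
    rw [Finset.mem_powersetCard] at hA
    rw [Finset.mem_image] at hA'
    obtain ⟨B, hB, rfl⟩ := hA'
    exact hz (hA.1 (Finset.mem_insert_self z B))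

/-- Let `S ⊆ {Z_1, …, Z_{d-1}}` (i.e. not containing the last
variable `Z_d`), and let `I` be an ideal of `ℂ[Z_1, …, Z_d]` containing `Z_d^{k+1}` and
containing `e_{j'}(S ∪ {Z_d})` for all `j - k ≤ j' ≤ j`.  Then, by repeated use of the
identity `e_{j'}(S ∪ {Z_d}) = e_{j'}(S) + Z_d · e_{j'-1}(S)`, one gets
`e_j(S) ≡ ± Z_d^{k+1} e_{j-k-1}(S) ≡ 0 mod I`; i.e. `e_j(S) ∈ I`. -/
theorem stmt14 (d k j : ℕ) (hd : 1 ≤ d) (S : Finset (Fin d))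
    (hS : (⟨d - 1, by omega⟩ : Fin d) ∉ S)
    (I : Ideal (MvPolynomial (Fin d) ℂ))
    (hZ : (X (⟨d - 1, by omega⟩ : Fin d)) ^ (k + 1) ∈ I)
    (hrec : ∀ j' : ℕ, j - k ≤ j' → j' ≤ j →
      esymmPart d (insert (⟨d - 1, by omega⟩ : Fin d) S) j' ∈ I) :
    esymmPart d S j ∈ I := by
  set z : Fin d := ⟨d - 1, by omega⟩ with hzdef
  by_cases hjk : j ≤ k
  · -- then e_0(S ∪ {z}) = 1 ∈ I, so I = ⊤
    have h0 : esymmPart d (insert z S) 0 ∈ I := hrec 0 (by omega) (by omega)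
    have : (1 : MvPolynomial (Fin d) ℂ) ∈ I := by
      simpa [_root_.esymmPart] using h0
    exact I.eq_top_iff_one.mpr this ▸ trivial
  · push_neg at hjk
    -- main induction: for m ≤ k+1, e_j(S) - (-1)^m Z^m e_{j-m}(S) ∈ I
    have key : ∀ m, m ≤ k + 1 →
        esymmPart d S j - (-1) ^ m * X z ^ m * esymmPart d S (j - m) ∈ I := by
      intro m
      induction m with
      | zero => intro _; simp only [pow_zero, one_mul, Nat.sub_zero]; simp
      | succ m ih =>
        intro hm
        have ihm := ih (by omega)
        have hjm : j - m = (j - (m + 1)) + 1 := by omega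
        have hins := esymmPart_insert d z S hS (j - (m + 1))
        rw [← hjm] at hins
        have hmem : esymmPart d (insert z S) (j - m) ∈ I :=
          hrec (j - m) (by omega) (by omega)
        have : esymmPart d S j - (-1) ^ (m + 1) * X z ^ (m + 1) * esymmPart d S (j - (m + 1))
            = (esymmPart d S j - (-1) ^ m * X z ^ m * esymmPart d S (j - m))
              + (-1) ^ m * X z ^ m * esymmPart d (insert z S) (j - m) := by
          rw [hins]; ring
        rw [this]
        exact I.add_mem ihm (I.mul_mem_left _ hmem)
    have h := key (k + 1) le_rfl
    have hz : (-1) ^ (k + 1) * X z ^ (k + 1) * esymmPart d S (j - (k + 1)) ∈ I :=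
      I.mul_mem_right _ (I.mul_mem_left _ hZ)
    have := I.add_mem h hz
    simpa using this
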